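/- Let M₂, M₃, M₄ be the explicit 18×18 integer matrices of structure constants for the left cell A₉ of W(H₄) given in the paper, and define M₁₈ = 3M₄ − 3M₄³ + M₄⁴. Then the characteristic polynomial of M₁₈ equals (u−1)¹⁰(u+1)⁸, and M₁₈² = I. -/

import Mathlib

/-! `M₁₈` turns out to be the permutation matrix of an involution of the basis with two fixed
points and eight 2-cycles, so it squares to the identity. Over any commutative ring, the permutation
matrix of an involution of a linearly ordered index set is conjugate, by a unipotent lower
triangular matrix, to an upper triangular one whose diagonal is `-1` at the larger element of each
2-cycle and `1` elsewhere; this gives the characteristic polynomial. -/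

open Polynomial Matrix

def P2 : Matrix (Fin 18) (Fin 18) ℤ :=
  !![0, 1, 0, 0, 0, 0, 0, 0, 0, 0, 0, 0, 0, 0, 0, 0, 0, 0;
  1, 1, 1, 1, 1, 0, 0, 0, 0, 0, 0, 0, 0, 0, 0, 0, 0, 0;
  0, 1, 1, 0, 1, 0, 1, 0, 0, 0, 0, 0, 0, 0, 0, 0, 0, 0;
  0, 1, 0, 0, 0, 1, 0, 0, 0, 0, 0, 0, 0, 0, 0, 0, 0, 0;
  0, 1, 1, 0, 2, 1, 1, 1, 1, 0, 0, 0, 0, 0, 0, 0, 0, 0;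
  0, 0, 0, 1, 1, 1, 0, 0, 1, 1, 0, 0, 0, 0, 0, 0, 0, 0;
  0, 0, 1, 0, 1, 0, 0, 1, 0, 0, 1, 0, 0, 0, 0, 0, 0, 0;
  0, 0, 0, 0, 1, 0, 1, 1, 1, 0, 1, 0, 1, 0, 0, 0, 0, 0;
  0, 0, 0, 0, 1, 1, 0, 1, 2, 0, 1, 1, 0, 1, 0, 0, 0, 0;
  0, 0, 0, 0, 0, 1, 0, 0, 0, 0, 0, 1, 0, 0, 0, 0, 0, 0;
  0, 0, 0, 0, 0, 0, 1, 1, 1, 0, 1, 0, 1, 1, 0, 0, 0, 0;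
  0, 0, 0, 0, 0, 0, 0, 0, 1, 1, 0, 1, 0, 1, 0, 1, 0, 0;
  0, 0, 0, 0, 0, 0, 0, 1, 0, 0, 1, 0, 0, 1, 1, 0, 0, 0;
  0, 0, 0, 0, 0, 0, 0, 0, 1, 0, 1, 1, 1, 2, 1, 0, 1, 0;
  0, 0, 0, 0, 0, 0, 0, 0, 0, 0, 0, 0, 1, 1, 1, 0, 1, 0;
  0, 0, 0, 0, 0, 0, 0, 0, 0, 0, 0, 1, 0, 0, 0, 0, 1, 0;
  0, 0, 0, 0, 0, 0, 0, 0, 0, 0, 0, 0, 0, 1, 1, 1, 1, 1;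
  0, 0, 0, 0, 0, 0, 0, 0, 0, 0, 0, 0, 0, 0, 0, 0, 1, 0]
def P3 : Matrix (Fin 18) (Fin 18) ℤ :=
  !![0, 0, 1, 0, 0, 0, 0, 0, 0, 0, 0, 0, 0, 0, 0, 0, 0, 0;
  0, 1, 1, 0, 1, 1, 0, 0, 0, 0, 0, 0, 0, 0, 0, 0, 0, 0;
  1, 1, 1, 0, 1, 0, 0, 1, 0, 0, 0, 0, 0, 0, 0, 0, 0, 0;
  0, 0, 0, 0, 1, 0, 0, 0, 0, 0, 0, 0, 0, 0, 0, 0, 0, 0;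
  0, 1, 1, 1, 2, 1, 1, 1, 1, 0, 1, 0, 0, 0, 0, 0, 0, 0;
  0, 1, 0, 0, 1, 1, 0, 0, 1, 0, 0, 1, 0, 0, 0, 0, 0, 0;
  0, 0, 0, 0, 1, 0, 1, 1, 1, 0, 0, 0, 0, 0, 0, 0, 0, 0;
  0, 0, 1, 0, 1, 0, 1, 1, 1, 0, 1, 0, 0, 1, 0, 0, 0, 0;
  0, 0, 0, 0, 1, 1, 1, 1, 2, 1, 1, 1, 1, 1, 0, 0, 0, 0;
  0, 0, 0, 0, 0, 0, 0, 0, 1, 0, 0, 0, 0, 0, 0, 0, 0, 0;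
  0, 0, 0, 0, 1, 0, 0, 1, 1, 0, 1, 0, 1, 1, 1, 0, 0, 0;
  0, 0, 0, 0, 0, 1, 0, 0, 1, 0, 0, 1, 0, 1, 0, 0, 1, 0;
  0, 0, 0, 0, 0, 0, 0, 0, 1, 0, 1, 0, 1, 1, 0, 0, 0, 0;
  0, 0, 0, 0, 0, 0, 0, 1, 1, 0, 1, 1, 1, 2, 1, 1, 1, 0;
  0, 0, 0, 0, 0, 0, 0, 0, 0, 0, 1, 0, 0, 1, 1, 0, 1, 1;
  0, 0, 0, 0, 0, 0, 0, 0, 0, 0, 0, 0, 0, 1, 0, 0, 0, 0;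
  0, 0, 0, 0, 0, 0, 0, 0, 0, 0, 0, 1, 0, 1, 1, 0, 1, 0;
  0, 0, 0, 0, 0, 0, 0, 0, 0, 0, 0, 0, 0, 0, 1, 0, 0, 0]
def P4 : Matrix (Fin 18) (Fin 18) ℤ :=
  !![0, 0, 0, 1, 0, 0, 0, 0, 0, 0, 0, 0, 0, 0, 0, 0, 0, 0;
  0, 1, 0, 0, 0, 0, 1, 0, 0, 0, 0, 0, 0, 0, 0, 0, 0, 0;
  0, 0, 0, 0, 1, 0, 0, 0, 0, 0, 0, 0, 0, 0, 0, 0, 0, 0;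
  1, 0, 0, 1, 0, 0, 0, 0, 0, 1, 0, 0, 0, 0, 0, 0, 0, 0;
  0, 0, 1, 0, 1, 0, 0, 0, 1, 0, 0, 0, 0, 0, 0, 0, 0, 0;
  0, 0, 0, 0, 0, 1, 0, 1, 0, 0, 0, 0, 0, 0, 0, 0, 0, 0;
  0, 1, 0, 0, 0, 0, 1, 0, 0, 0, 0, 0, 1, 0, 0, 0, 0, 0;
  0, 0, 0, 0, 0, 1, 0, 1, 0, 0, 1, 0, 0, 0, 0, 0, 0, 0;
  0, 0, 0, 0, 1, 0, 0, 0, 1, 0, 0, 0, 0, 1, 0, 0, 0, 0;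
  0, 0, 0, 1, 0, 0, 0, 0, 0, 1, 0, 0, 0, 0, 0, 1, 0, 0;
  0, 0, 0, 0, 0, 0, 0, 1, 0, 0, 1, 1, 0, 0, 0, 0, 0, 0;
  0, 0, 0, 0, 0, 0, 0, 0, 0, 0, 1, 1, 0, 0, 0, 0, 0, 0;
  0, 0, 0, 0, 0, 0, 1, 0, 0, 0, 0, 0, 1, 0, 0, 0, 1, 0;
  0, 0, 0, 0, 0, 0, 0, 0, 1, 0, 0, 0, 0, 1, 1, 0, 0, 0;
  0, 0, 0, 0, 0, 0, 0, 0, 0, 0, 0, 0, 0, 1, 0, 0, 0, 0;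
  0, 0, 0, 0, 0, 0, 0, 0, 0, 1, 0, 0, 0, 0, 0, 1, 0, 1;
  0, 0, 0, 0, 0, 0, 0, 0, 0, 0, 0, 0, 1, 0, 0, 0, 1, 0;
  0, 0, 0, 0, 0, 0, 0, 0, 0, 0, 0, 0, 0, 0, 0, 1, 0, 0]

def P18 : Matrix (Fin 18) (Fin 18) ℤ := 3 * P4 - 3 * P4 ^ 3 + P4 ^ 4


open Finset

namespace Matrix

variable {n R : Type*} [CommRing R]

theorem charpoly_eq_of_mul_eq_mul [Fintype n] [DecidableEq n] {M S S' T : Matrix n n R}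
    (hS : S' * S = 1) (h : M * S = S * T) : M.charpoly = T.charpoly := by
  have hM : M = S * (T * S') := by
    rw [← mul_assoc, ← h, mul_assoc, mul_eq_one_comm.mp hS, mul_one]
  rw [hM, charpoly_mul_comm, mul_assoc, hS, mul_one]

theorem permMatrix_sq_of_involutive [Fintype n] [DecidableEq n] {σ : Equiv.Perm n}
    (hσ : Function.Involutive σ) : σ.permMatrix R ^ 2 = 1 := by
  rw [sq, ← permMatrix_mul, show σ * σ = 1 from Equiv.ext hσ, permMatrix_one]

section LinearOrder

variable [LinearOrder n] (σ : Equiv.Perm n)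

variable (R) in
def permMatrixStrictLower : Matrix n n R := of fun i j => if j = σ i ∧ j < i then 1 else 0

/- The columns of `1 + permMatrixStrictLower R σ` are `e i + e (σ i)` for `i < σ i` and `e i`
otherwise; in this basis the permutation matrix fixes the first kind and, for `σ i < i`, sends
`e i` to `(e (σ i) + e i) - e i`. -/
variable (R) in
def involutionTriangularForm : Matrix n n R :=
  of fun i j => if i = j then (if σ i < i then -1 else 1) else if j = σ i ∧ i < j then 1 else 0

theorem permMatrixStrictLower_mul_apply [Fintype n] (M : Matrix n n R) (i k : n) :
    (permMatrixStrictLower R σ * M) i k = if σ i < i then M (σ i) k else 0 := by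
  simp only [permMatrixStrictLower, mul_apply, of_apply, ite_and, ite_mul, one_mul, zero_mul]
  rw [sum_ite_eq']
  simp

variable {σ}

theorem isUpperTriangular_involutionTriangularForm :
    (involutionTriangularForm R σ).IsUpperTriangular := by
  intro i j (hji : j < i)
  simp only [involutionTriangularForm, of_apply]
  rw [if_neg hji.ne', if_neg fun h => lt_asymm hji h.2]

variable [Fintype n]

theorem permMatrixStrictLower_mul_self (hσ : Function.Involutive σ) :
    permMatrixStrictLower R σ * permMatrixStrictLower R σ = 0 := by
  ext i k
  rw [permMatrixStrictLower_mul_apply]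
  simp only [permMatrixStrictLower, of_apply, hσ i, zero_apply]
  split_ifs with h1 h2
  exacts [absurd h1 (h2.1 ▸ h2.2).not_gt, rfl, rfl]

theorem one_sub_permMatrixStrictLower_mul_one_add (hσ : Function.Involutive σ) :
    (1 - permMatrixStrictLower R σ) * (1 + permMatrixStrictLower R σ) = 1 := by
  rw [mul_add, sub_mul, sub_mul, permMatrixStrictLower_mul_self hσ]
  noncomm_ring

theorem permMatrix_mul_one_add_permMatrixStrictLower (hσ : Function.Involutive σ) :
    σ.permMatrix R * (1 + permMatrixStrictLower R σ) =
      (1 + permMatrixStrictLower R σ) * involutionTriangularForm R σ := by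
  ext i k
  rw [PEquiv.toMatrix_toPEquiv_mul, add_mul, one_mul, add_apply,
    permMatrixStrictLower_mul_apply]
  simp only [submatrix_apply, id, add_apply, one_apply, permMatrixStrictLower,
    involutionTriangularForm, of_apply, hσ i]
  rcases lt_trichotomy (σ i) i with h | h | h
  · rcases eq_or_ne k i with rfl | hki
    · simp [h, h.ne, h.not_gt]
    · rcases eq_or_ne k (σ i) with rfl | hk
      · simp [h, hki.symm, h.not_gt]
      · simp [h, hki, hk, Ne.symm hki, Ne.symm hk]
  · rcases eq_or_ne k i with rfl | hki
    · simp [h]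
    · simp [h, hki, Ne.symm hki]
  · rcases eq_or_ne k i with rfl | hki
    · simp [h, h.ne', h.not_gt]
    · rcases eq_or_ne k (σ i) with rfl | hk
      · simp [h, hki.symm, h.not_gt]
      · simp [hki, hk, Ne.symm hki, Ne.symm hk, h.not_gt]

theorem charpoly_permMatrix_of_involutive (hσ : Function.Involutive σ) :
    (σ.permMatrix R).charpoly = (X - 1) ^ #{i | i ≤ σ i} * (X + 1) ^ #{i | σ i < i} := by
  rw [charpoly_eq_of_mul_eq_mul (one_sub_permMatrixStrictLower_mul_one_add hσ)
      (permMatrix_mul_one_add_permMatrixStrictLower hσ),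
    charpoly_of_isUpperTriangular _ isUpperTriangular_involutionTriangularForm]
  have hdiag (i : n) :
      X - C (involutionTriangularForm R σ i i) = if σ i < i then X + 1 else X - 1 := by
    simp only [involutionTriangularForm, of_apply, if_true]
    split_ifs <;> simp [sub_eq_add_neg]
  simp_rw [hdiag, prod_ite, prod_const, not_lt]
  rw [mul_comm]

end LinearOrder

end Matrix

def sigma18 : Equiv.Perm (Fin 18) :=
  Function.Involutive.toPerm ![17, 16, 14, 15, 13, 11, 12, 10, 8, 9, 7, 5, 6, 4, 2, 3, 1, 0]
    (by unfold Function.Involutive; decide)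

set_option maxHeartbeats 4000000 in
set_option maxRecDepth 10000 in
theorem P18_eq_permMatrix : P18 = sigma18.permMatrix ℤ := by
  decide

/-- M₁₈ = 3M₄ − 3M₄³ + M₄⁴ has characteristic polynomial (u−1)¹⁰(u+1)⁸ and
squares to the identity. -/
theorem stmt13 :
    P18.charpoly = (X - 1) ^ 10 * (X + 1) ^ 8 ∧ P18 ^ 2 = 1 := by
  have hσ : Function.Involutive sigma18 := Function.Involutive.toPerm_involutive _
  have hcard_le : #{i | i ≤ sigma18 i} = 10 := by decide
  have hcard_lt : #{i | sigma18 i < i} = 8 := by decide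
  rw [P18_eq_permMatrix]
  exact ⟨by rw [charpoly_permMatrix_of_involutive hσ, hcard_le, hcard_lt],
    permMatrix_sq_of_involutive hσ⟩
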